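/- arXiv:math/0107170 — 4 statements merged into one kernel-verified Lean document; each statement's English description precedes it below -/
import Mathlib

section
/- For every real s, the map H(z,w) = (z/(1 - s·w²)^{1/2}, w/(1 - s·w²)^{1/2}), defined for |w| < 1/√|s| (all w if s = 0) using the principal branch of the square root, maps points of M (in a neighborhood of 0) into M. -/
/-- `S(t) = i t + √(1 - t²)`. -/
noncomputable def S (t : ℝ) : ℂ := Complex.I * t + (Real.sqrt (1 - t ^ 2) : ℂ)

/-- The hypersurface `M = {(z,w) : |z| < 1, w = conj(w) · S(|z|²)}`. -/
noncomputable def M : Set (ℂ × ℂ) :=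
  {p | ‖p.1‖ < 1 ∧ p.2 = (starRingEnd ℂ) p.2 * S (‖p.1‖ ^ 2)}

/-- `H(z,w) = (z (1 - s w²)^{-1/2}, w (1 - s w²)^{-1/2})`, principal branch. -/
noncomputable def H (s : ℝ) (p : ℂ × ℂ) : ℂ × ℂ :=
  (p.1 / (1 - (s : ℂ) * p.2 ^ 2) ^ ((1 : ℂ) / 2),
   p.2 / (1 - (s : ℂ) * p.2 ^ 2) ^ ((1 : ℂ) / 2))

theorem stmt_4 (s : ℝ) :
    ∃ δ > 0, (s ≠ 0 → δ ≤ 1 / Real.sqrt |s|) ∧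
      ∀ p : ℂ × ℂ, p ∈ M → ‖p.1‖ < δ → ‖p.2‖ < δ → H s p ∈ M := by
  have hs1 : (0:ℝ) < 1 + |s| := by positivity
  refine ⟨min (1/2) (1/(1+|s|)), by positivity, ?_, ?_⟩
  · intro hs
    have h2 : 0 < Real.sqrt |s| := Real.sqrt_pos.2 (abs_pos.2 hs)
    have h1 : Real.sqrt |s| ≤ 1 + |s| := by
      nlinarith [Real.sq_sqrt (abs_nonneg s), sq_nonneg (Real.sqrt |s| - 1)]
    calc min (1/2) (1/(1+|s|)) ≤ 1/(1+|s|) := min_le_right _ _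
      _ ≤ 1 / Real.sqrt |s| := one_div_le_one_div_of_le h2 h1
  · rintro ⟨z, w⟩ ⟨hz1, hw⟩ hz hwlt
    simp only at hz1 hw hz hwlt
    by_cases hw0 : w = 0
    · refine ⟨?_, ?_⟩ <;>
        simp [H, hw0, M, Complex.one_cpow, S, hz1]
    simp only [M, Set.mem_setOf_eq, H]
    -- notation
    set t : ℝ := ‖z‖ ^ 2 with ht_def
    set a : ℝ := ‖w‖ ^ 2 with ha_def
    set b : ℝ := s * a with hb_def
    set q : ℝ := Real.sqrt (1 - t ^ 2) with hq_def
    set u : ℂ := 1 - (s : ℂ) * w ^ 2 with hu_def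
    set r : ℝ := ‖u‖ with hr_def
    set c : ℂ := u ^ ((1 : ℂ) / 2) with hc_def
    clear_value t a b q r u c
    have hzt : ‖z‖ < 1/2 := lt_of_lt_of_le hz (min_le_left _ _)
    have hzs : ‖z‖ < 1/(1+|s|) := lt_of_lt_of_le hz (min_le_right _ _)
    have hwt : ‖w‖ < 1/2 := lt_of_lt_of_le hwlt (min_le_left _ _)
    have hws : ‖w‖ < 1/(1+|s|) := lt_of_lt_of_le hwlt (min_le_right _ _)
    have hws' : ‖w‖ * (1 + |s|) < 1 := by
      rw [← lt_div_iff₀ hs1]; exact hws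
    have hz0 : 0 ≤ ‖z‖ := norm_nonneg z
    have hw0' : 0 ≤ ‖w‖ := norm_nonneg w
    have ht0 : 0 ≤ t := by rw [ht_def]; positivity
    have ha0 : 0 ≤ a := by rw [ha_def]; positivity
    have ht : t < 1/4 := by rw [ht_def]; nlinarith
    have ha : a < 1/4 := by rw [ha_def]; nlinarith
    have hb : |b| ≤ 1/2 := by
      rw [hb_def, abs_mul, abs_of_nonneg ha0, ha_def]
      nlinarith [abs_nonneg s]
    have ht2 : (0:ℝ) ≤ 1 - t ^ 2 := by nlinarith
    have hq2 : q ^ 2 = 1 - t ^ 2 := by rw [hq_def]; exact Real.sq_sqrt ht2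
    have hq : 1/2 < q := by nlinarith [Real.sqrt_nonneg (1 - t^2)]
    have hqb : b < q := by
      have : b ≤ |b| := le_abs_self b
      linarith
    -- basic complex facts about S t
    have hS : S t = Complex.I * (t:ℂ) + (q:ℂ) := by rw [hq_def]; simp only [S]
    have hSconj : (starRingEnd ℂ) (S t) = (q:ℂ) - Complex.I * (t:ℂ) := by
      rw [hS]; simp [Complex.conj_ofReal]; ring
    have h1 : q ^ 2 + t ^ 2 = 1 := by linarith
    have h1c : (q:ℂ)^2 + (t:ℂ)^2 = 1 := by exact_mod_cast h1
    have hSS : S t * (starRingEnd ℂ) (S t) = 1 := by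
      rw [hSconj, hS]
      linear_combination h1c - (t:ℂ)^2 * Complex.I_sq
    -- rewrite w² on M
    have hw2sq : w ^ 2 = (a : ℂ) * S t := by
      have h2 : w * ((starRingEnd ℂ) w * S t) = (w * (starRingEnd ℂ) w) * S t := by ring
      have h3 : w * (starRingEnd ℂ) w = (a : ℂ) := by
        rw [Complex.mul_conj, ha_def]; norm_cast; exact (Complex.sq_norm w).symm
      calc w ^ 2 = w * w := sq w
        _ = w * ((starRingEnd ℂ) w * S t) := by nth_rewrite 2 [hw]; rfl
        _ = (a:ℂ) * S t := by rw [h2, h3]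
    have hu_eq : u = 1 - (b:ℂ) * S t := by
      rw [hu_def, hw2sq, hb_def]; push_cast; ring
    have hre : u.re = 1 - b * q := by rw [hu_eq, hS]; simp
    have him : u.im = -(b * t) := by rw [hu_eq, hS]; simp
    have hr2 : r ^ 2 = (1 - b*q)^2 + (b*t)^2 := by
      rw [hr_def, Complex.sq_norm, Complex.normSq_apply, hre, him]; ring
    have hr2t : r ^ 2 - t ^ 2 = (q - b) ^ 2 := by
      linear_combination hr2 + (b^2 - 1) * hq2
    have hr_nonneg : 0 ≤ r := by rw [hr_def]; exact norm_nonneg u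
    have h6 : 0 < r ^ 2 := by
      linarith [sq_nonneg t, pow_pos (sub_pos.2 hqb) 2]
    have hr_pos : 0 < r := by
      rcases hr_nonneg.lt_or_eq with h | h
      · exact h
      · exfalso; rw [← h] at h6; simp at h6
    have hrt : t < r := by
      by_contra hcon
      push_neg at hcon
      have h7 : r ^ 2 ≤ t ^ 2 := pow_le_pow_left₀ hr_nonneg hcon 2
      linarith [pow_pos (sub_pos.2 hqb) 2]
    have hu0 : u ≠ 0 := by
      intro h
      rw [hr_def, h] at hr_pos
      simp at hr_pos
    have hc2 : c ^ 2 = u := by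
      rw [hc_def, sq, ← Complex.cpow_add _ _ hu0]
      norm_num
    have hc0 : c ≠ 0 := by
      intro h; apply hu0; rw [← hc2, h]; ring
    have hcconj0 : (starRingEnd ℂ) c ≠ 0 := by
      simpa using hc0
    have habs_c : ‖c‖ ^ 2 = r := by
      rw [← norm_pow, hc2, hr_def]
    have hcc : c * (starRingEnd ℂ) c = (r:ℂ) := by
      rw [Complex.mul_conj]
      norm_cast
      rw [← Complex.sq_norm, habs_c]
    have habs_c_pos : 0 < ‖c‖ := norm_pos_iff.mpr hc0
    -- first component
    have goal1 : ‖z / c‖ < 1 := by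
      rw [norm_div, div_lt_one habs_c_pos]
      by_contra hcon
      push_neg at hcon
      have h8 : ‖c‖ ^ 2 ≤ ‖z‖ ^ 2 :=
        pow_le_pow_left₀ (norm_nonneg c) hcon 2
      rw [habs_c, ← ht_def] at h8
      linarith
    have ht' : ‖z / c‖ ^ 2 = t / r := by
      rw [norm_div, div_pow, habs_c, ht_def]
    -- sqrt computation
    have hsq' : Real.sqrt (1 - (t/r)^2) = (q - b)/r := by
      have h4 : 1 - (t/r)^2 = ((q - b)/r)^2 := by
        field_simp
        linear_combination hr2t
      rw [h4, Real.sqrt_sq (div_nonneg (sub_nonneg.2 hqb.le) hr_nonneg)]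
    have hr0C : (r:ℂ) ≠ 0 := by exact_mod_cast hr_pos.ne'
    have hkey : (r:ℂ) * S (t/r) = S t - (b:ℂ) := by
      rw [S, hsq', hS]
      push_cast
      field_simp
      ring
    have hconj_u : (starRingEnd ℂ) u = ((starRingEnd ℂ) c) ^ 2 := by
      rw [← hc2, map_pow]
    have hconjS_u : (starRingEnd ℂ) u * S t = S t - (b:ℂ) := by
      have h5 : (starRingEnd ℂ) u = 1 - (b:ℂ) * (starRingEnd ℂ) (S t) := by
        rw [hu_eq]
        simp [Complex.conj_ofReal]
      rw [h5]
      linear_combination (-(b:ℂ)) * hSS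
    have hkey2 : (r:ℂ) * S (t/r) = (starRingEnd ℂ) u * S t := by
      rw [hkey, hconjS_u]
    -- second component
    have goal2 : w / c = (starRingEnd ℂ) (w / c) * S (‖z / c‖ ^ 2) := by
      rw [ht', map_div₀, div_mul_eq_mul_div, div_eq_div_iff hc0 hcconj0]
      refine (mul_left_cancel₀ hr0C ?_).symm
      calc (r:ℂ) * ((starRingEnd ℂ) w * S (t/r) * c)
          = (starRingEnd ℂ) w * ((r:ℂ) * S (t/r)) * c := by ring
        _ = (starRingEnd ℂ) w * ((starRingEnd ℂ) u * S t) * c := by rw [hkey2]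
        _ = (starRingEnd ℂ) w * (((starRingEnd ℂ) c)^2 * S t) * c := by rw [hconj_u]
        _ = ((starRingEnd ℂ) w * S t) * ((c * (starRingEnd ℂ) c) * (starRingEnd ℂ) c) := by
            ring
        _ = w * ((r:ℂ) * (starRingEnd ℂ) c) := by rw [← hw, hcc]
        _ = (r:ℂ) * (w * (starRingEnd ℂ) c) := by ring
    exact ⟨goal1, goal2⟩
end

section
/- The family of maps H_s(z,w) = (z/(1 - s·w²)^{1/2}, w/(1 - s·w²)^{1/2}), for s ∈ ℝ, all agree with the identity map up to order 2 at the origin: every partial derivative of H_s of order ≤ 2 at (0,0) equals the corresponding derivative of the identity; yet H_s ≠ H_{s'} as germs whenever s ≠ s'. -/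
section

variable {𝕜 E F : Type*} [NontriviallyNormedField 𝕜] [NormedAddCommGroup E] [NormedSpace 𝕜 E]
  [NormedAddCommGroup F] [NormedSpace 𝕜 F]

theorem iteratedFDeriv_comp_neg (f : E → F) (n : ℕ) (x : E) :
    iteratedFDeriv 𝕜 n (fun y ↦ f (-y)) x = (-1 : 𝕜) ^ n • iteratedFDeriv 𝕜 n f (-x) := by
  have h := (ContinuousLinearEquiv.neg 𝕜 (M := E)).iteratedFDerivWithin_comp_right f
    uniqueDiffOn_univ (x := x) (Set.mem_univ _) n
  simp only [Set.preimage_univ, iteratedFDerivWithin_univ, Function.comp_def,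
    ContinuousLinearEquiv.neg_apply] at h
  ext m
  have hm : (fun i ↦ -m i) = fun i ↦ (-1 : 𝕜) • m i := by simp
  rw [h]
  simp [hm, ContinuousMultilinearMap.map_smul_univ]

theorem Function.Odd.iteratedFDeriv_zero_eq_zero [CharZero 𝕜] {f : E → F} (hf : f.Odd)
    {n : ℕ} (hn : Even n) : iteratedFDeriv 𝕜 n f 0 = 0 := by
  have h := iteratedFDeriv_comp_neg (𝕜 := 𝕜) f n 0
  rw [show (fun x ↦ f (-x)) = -f from funext hf, iteratedFDeriv_neg_apply, hn.neg_one_pow,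
    one_smul, neg_zero] at h
  have := IsAddTorsionFree.of_isTorsionFree 𝕜 (E [×n]→L[𝕜] F)
  exact self_eq_neg.mp h.symm

theorem hasFDerivAt_smul_self_zero {c : E → 𝕜} (hc : DifferentiableAt 𝕜 c 0) :
    HasFDerivAt (fun p ↦ c p • p) (c 0 • ContinuousLinearMap.id 𝕜 E) 0 :=
  (hc.hasFDerivAt.smul (hasFDerivAt_id (0 : E))).congr_fderiv (by simp)

end

theorem H_odd (s : ℝ) : (H s).Odd := fun p ↦ by
  simp [H, neg_div]

theorem H_eq_smul (s : ℝ) :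
    H s = fun p ↦ ((1 - (s : ℂ) * p.2 ^ 2) ^ ((1 : ℂ) / 2))⁻¹ • p := by
  ext p <;> simp [H, div_eq_inv_mul]

theorem hasFDerivAt_H_zero (s : ℝ) :
    HasFDerivAt (H s) (ContinuousLinearMap.id ℂ (ℂ × ℂ)) 0 := by
  have hc : DifferentiableAt ℂ
      (fun p : ℂ × ℂ ↦ ((1 - (s : ℂ) * p.2 ^ 2) ^ ((1 : ℂ) / 2))⁻¹) 0 := by
    fun_prop (disch := simp)
  simpa [H_eq_smul] using hasFDerivAt_smul_self_zero hc

theorem eq_of_H_apply_eq {s s' : ℝ} {p : ℂ × ℂ} (hp : p.2 ≠ 0) (h : H s p = H s' p) :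
    s = s' := by
  have hroot : (1 - (s : ℂ) * p.2 ^ 2) ^ ((1 : ℂ) / 2)
      = (1 - (s' : ℂ) * p.2 ^ 2) ^ ((1 : ℂ) / 2) := by
    simpa [H, div_eq_mul_inv, hp] using congrArg Prod.snd h
  have hbase : 1 - (s : ℂ) * p.2 ^ 2 = 1 - (s' : ℂ) * p.2 ^ 2 := by
    rw [show (1 : ℂ) / 2 = ((2 : ℕ) : ℂ)⁻¹ by norm_num] at hroot
    rw [← Complex.cpow_nat_inv_pow (1 - (s : ℂ) * p.2 ^ 2) two_ne_zero, hroot,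
      Complex.cpow_nat_inv_pow _ two_ne_zero]
  exact_mod_cast mul_right_cancel₀ (pow_ne_zero 2 hp) (sub_right_injective hbase)

theorem stmt_5 :
    (∀ s : ℝ, ∀ n : ℕ, n ≤ 2 →
      iteratedFDeriv ℂ n (H s) 0 = iteratedFDeriv ℂ n (id : ℂ × ℂ → ℂ × ℂ) 0) ∧
    (∀ s s' : ℝ, s ≠ s' → ¬ (H s =ᶠ[nhds (0 : ℂ × ℂ)] H s')) := by
  refine ⟨fun s n hn ↦ ?_, fun s s' hss hEq ↦ ?_⟩
  · have hid : (id : ℂ × ℂ → ℂ × ℂ).Odd := fun _ ↦ rfl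
    interval_cases n
    · rw [(H_odd s).iteratedFDeriv_zero_eq_zero Even.zero,
        hid.iteratedFDeriv_zero_eq_zero Even.zero]
    · refine ContinuousMultilinearMap.ext fun m ↦ ?_
      rw [iteratedFDeriv_one_apply, iteratedFDeriv_one_apply, (hasFDerivAt_H_zero s).fderiv,
        fderiv_id]
    · rw [(H_odd s).iteratedFDeriv_zero_eq_zero even_two,
        hid.iteratedFDeriv_zero_eq_zero even_two]
  · obtain ⟨p, hp, hHp⟩ :=
      ((dense_compl_singleton (0 : ℂ)).preimage isOpenMap_snd).inter_nhds_nonempty hEq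
    exact hss (eq_of_H_apply_eq hp hHp)
end

section
/- If H = (H₁, H₂) is a formal automorphism of (M, 0), i.e., an invertible pair of formal power series vanishing at 0 satisfying H₂(z, τ·S(zχ)) = conj-series H₂(χ,τ) · S(H₁(z, τ·S(zχ)) · conj-series H₁(χ,τ)) as formal power series in (z, χ, τ), then H₂(z, 0) = 0 identically; hence H₂(z,w) = w·g(z,w) for some formal power series g. -/
open MvPowerSeries

/-- The finite set of exponent multi-indices `d : Fin n →₀ ℕ` with all entries `≤ N`. -/
noncomputable def expSet (n N : ℕ) : Finset (Fin n →₀ ℕ) :=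
  (Fintype.piFinset fun _ : Fin n => Finset.range (N + 1)).map
    (Finsupp.equivFunOnFinite.symm.toEmbedding)

/-- Substitution of the `m`-variable power series `u i` for the variables of the
`n`-variable power series `F`.  When every `u i` has zero constant term, the
coefficient of a monomial `e` in `F(u)` only involves exponents `d` with
`∑ d i ≤ |e|` (hence with each `d i ≤ |e|`), so the finite sum below computes it. -/
noncomputable def pssubst {n m : ℕ} (F : MvPowerSeries (Fin n) ℂ)
    (u : Fin n → MvPowerSeries (Fin m) ℂ) : MvPowerSeries (Fin m) ℂ :=
  fun e => ∑ d ∈ expSet n (e.sum fun _ k => k),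
    MvPowerSeries.coeff d F * MvPowerSeries.coeff e (∏ i, u i ^ d i)

/-- Coefficientwise complex conjugation of a power series. -/
noncomputable def conjSeries {n : ℕ} (F : MvPowerSeries (Fin n) ℂ) :
    MvPowerSeries (Fin n) ℂ :=
  MvPowerSeries.map (starRingEnd ℂ) F

/-- The variables of `ℂ[[z, χ, τ]]`. -/
noncomputable def X3 (i : Fin 3) : MvPowerSeries (Fin 3) ℂ := X i

lemma mem_expSet {n N : ℕ} {d : Fin n →₀ ℕ} : d ∈ expSet n N ↔ ∀ i, d i ≤ N := by
  simp [expSet, Finset.mem_map_equiv, Fintype.mem_piFinset, Nat.lt_succ_iff]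

lemma coeff_pssubst {n m : ℕ} (F : MvPowerSeries (Fin n) ℂ)
    (u : Fin n → MvPowerSeries (Fin m) ℂ) (e : Fin m →₀ ℕ) :
    MvPowerSeries.coeff e (pssubst F u) = ∑ d ∈ expSet n (e.sum fun _ k => k),
      MvPowerSeries.coeff d F * MvPowerSeries.coeff e (∏ i, u i ^ d i) := rfl

lemma coeff_single0_term (k a b : ℕ) (T : MvPowerSeries (Fin 3) ℂ) :
    MvPowerSeries.coeff (Finsupp.single (0 : Fin 3) k) (X 0 ^ a * (X 2 * T) ^ b)
      = if a = k ∧ b = 0 then 1 else 0 := by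
  cases b with
  | zero =>
    simp only [pow_zero, mul_one, MvPowerSeries.coeff_X_pow, and_true]
    by_cases h : a = k
    · subst h; simp
    · rw [if_neg, if_neg h]
      intro hcontra
      exact h (by simpa using (DFunLike.congr_fun hcontra 0).symm)
  | succ n =>
    rw [if_neg (by simp)]
    have hre : (X (0:Fin 3) : MvPowerSeries (Fin 3) ℂ) ^ a * (X 2 * T) ^ (n+1)
        = (X 2 : MvPowerSeries (Fin 3) ℂ) * (X 0 ^ a * ((X 2 * T) ^ n * T)) := by ring
    rw [hre, MvPowerSeries.coeff_mul]
    apply Finset.sum_eq_zero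
    intro p hp
    rw [Finset.HasAntidiagonal.mem_antidiagonal] at hp
    rw [MvPowerSeries.coeff_X]
    split_ifs with h
    · exfalso
      have h2 := DFunLike.congr_fun hp 2
      simp [h, Finsupp.single_apply] at h2
    · simp

lemma sum_single0 (k : ℕ) : ((Finsupp.single (0 : Fin 3) k).sum fun _ m => m) = k := by
  simp [Finsupp.sum_single_index]

lemma single0_mem (k : ℕ) : (Finsupp.single (0 : Fin 2) k) ∈ expSet 2 k := by
  rw [mem_expSet]
  intro i
  fin_cases i <;> simp [Finsupp.single_apply]

lemma coeff_lhs (k : ℕ) (H₂ : MvPowerSeries (Fin 2) ℂ) (T : MvPowerSeries (Fin 3) ℂ) :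
    MvPowerSeries.coeff (Finsupp.single (0 : Fin 3) k) (pssubst H₂ ![X3 0, X3 2 * T])
      = MvPowerSeries.coeff (Finsupp.single (0 : Fin 2) k) H₂ := by
  rw [coeff_pssubst, sum_single0]
  have hterm : ∀ d ∈ expSet 2 k,
      MvPowerSeries.coeff d H₂ *
        MvPowerSeries.coeff (Finsupp.single (0 : Fin 3) k) (∏ i, (![X3 0, X3 2 * T]) i ^ d i)
      = if d = Finsupp.single (0 : Fin 2) k then MvPowerSeries.coeff d H₂ else 0 := by
    intro d _
    rw [Fin.prod_univ_two]
    simp only [Matrix.cons_val_zero, Matrix.cons_val_one, Matrix.head_cons, X3]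
    rw [coeff_single0_term]
    have hiff : (d 0 = k ∧ d 1 = 0) ↔ d = Finsupp.single (0 : Fin 2) k := by
      constructor
      · rintro ⟨h1, h2⟩
        ext i
        fin_cases i <;> simp [h1, h2, Finsupp.single_apply]
      · rintro rfl
        simp [Finsupp.single_apply]
    by_cases h : d = Finsupp.single (0 : Fin 2) k
    · rw [if_pos (hiff.mpr h), if_pos h, mul_one]
    · rw [if_neg (fun hc => h (hiff.mp hc)), if_neg h, mul_zero]
  rw [Finset.sum_congr rfl hterm, Finset.sum_ite_eq' _ _ (fun d => MvPowerSeries.coeff d H₂),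
    if_pos (single0_mem k)]

lemma coeff_F_zero (H : MvPowerSeries (Fin 2) ℂ) (h0 : constantCoeff H = 0)
    (p : Fin 3 →₀ ℕ) (hp1 : p 1 = 0) (hp2 : p 2 = 0) :
    MvPowerSeries.coeff p (pssubst (conjSeries H) ![X3 1, X3 2]) = 0 := by
  rw [coeff_pssubst]
  apply Finset.sum_eq_zero
  intro d _
  by_cases hd : d = 0
  · subst hd
    have : MvPowerSeries.coeff (0 : Fin 2 →₀ ℕ) (conjSeries H) = 0 := by
      rw [conjSeries, MvPowerSeries.coeff_map]
      rw [MvPowerSeries.coeff_zero_eq_constantCoeff, h0, map_zero]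
    rw [this, zero_mul]
  · have : MvPowerSeries.coeff p (∏ i, (![X3 1, X3 2]) i ^ d i) = 0 := by
      rw [Fin.prod_univ_two]
      simp only [Matrix.cons_val_zero, Matrix.cons_val_one, Matrix.head_cons, X3]
      rw [MvPowerSeries.coeff_mul]
      apply Finset.sum_eq_zero
      intro q hq
      rw [Finset.HasAntidiagonal.mem_antidiagonal] at hq
      rw [MvPowerSeries.coeff_X_pow, MvPowerSeries.coeff_X_pow]
      split_ifs with h1 h2
      · exfalso
        apply hd
        have e1 := DFunLike.congr_fun hq 1
        have e2 := DFunLike.congr_fun hq 2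
        rw [h1, h2] at e1 e2
        simp [Finsupp.single_apply, hp1, hp2] at e1 e2
        ext i
        fin_cases i <;> simp [e1, e2]
      all_goals simp
    rw [this, mul_zero]

lemma coeff_rhs (k : ℕ) (H : MvPowerSeries (Fin 2) ℂ) (h0 : constantCoeff H = 0)
    (G : MvPowerSeries (Fin 3) ℂ) :
    MvPowerSeries.coeff (Finsupp.single (0 : Fin 3) k)
      (pssubst (conjSeries H) ![X3 1, X3 2] * G) = 0 := by
  rw [MvPowerSeries.coeff_mul]
  apply Finset.sum_eq_zero
  intro p hp
  rw [Finset.HasAntidiagonal.mem_antidiagonal] at hp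
  have e1 := DFunLike.congr_fun hp 1
  have e2 := DFunLike.congr_fun hp 2
  simp [Finsupp.single_apply] at e1 e2
  rw [coeff_F_zero H h0 p.1 (by omega) (by omega), zero_mul]

theorem stmt_14 (S : MvPowerSeries (Fin 1) ℂ) (hS : constantCoeff S = 1)
    (H₁ H₂ : MvPowerSeries (Fin 2) ℂ)
    (h0 : constantCoeff H₁ = 0) (h0' : constantCoeff H₂ = 0)
    (hJac : MvPowerSeries.coeff (Finsupp.single 0 1) H₁ *
          MvPowerSeries.coeff (Finsupp.single 1 1) H₂ -
        MvPowerSeries.coeff (Finsupp.single 1 1) H₁ *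
          MvPowerSeries.coeff (Finsupp.single 0 1) H₂ ≠ 0)
    -- the automorphism identity  H₂(z, τ S(zχ)) = conj-H₂(χ,τ) · S(H₁(z, τ S(zχ)) · conj-H₁(χ,τ))
    (hid : pssubst H₂ ![X3 0, X3 2 * pssubst S ![X3 0 * X3 1]]
        = pssubst (conjSeries H₂) ![X3 1, X3 2] *
          pssubst S ![pssubst H₁ ![X3 0, X3 2 * pssubst S ![X3 0 * X3 1]] *
            pssubst (conjSeries H₁) ![X3 1, X3 2]]) :
    (∀ k : ℕ, MvPowerSeries.coeff (Finsupp.single 0 k) H₂ = 0) ∧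
      ∃ g : MvPowerSeries (Fin 2) ℂ, H₂ = X 1 * g := by
  have key : ∀ k : ℕ, MvPowerSeries.coeff (Finsupp.single 0 k) H₂ = 0 := by
    intro k
    have h1 := congrArg (MvPowerSeries.coeff (Finsupp.single (0 : Fin 3) k)) hid
    rw [coeff_lhs, coeff_rhs k H₂ h0'] at h1
    exact h1
  refine ⟨key, ?_⟩
  have hdvd : (X 1 : MvPowerSeries (Fin 2) ℂ) ∣ H₂ := by
    rw [MvPowerSeries.X_dvd_iff]
    intro m hm
    have hme : m = Finsupp.single 0 (m 0) := by
      ext i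
      fin_cases i <;> simp [hm, Finsupp.single_apply]
    rw [hme]
    exact key (m 0)
  obtain ⟨g, hg⟩ := hdvd
  exact ⟨g, hg⟩
end

section
/- Under the hypotheses of the preceding item, differentiating the identity S(zχ)·g(z, τS(zχ)) = conj-g(χ,τ)·S(f(z, τS(zχ))·conj-f(χ,τ)) once in χ and setting χ = τ = 0 yields f(z,0) = z / a₀¹ where a₀¹ = conj(f_z(0,0)); moreover conj(a₀¹) = 1/a₀¹, so a₀¹ is unimodular. -/
open MvPowerSeries

lemma fsum_eq {n : ℕ} (e : Fin n →₀ ℕ) : (e.sum fun _ k => k) = ∑ i, e i :=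
  Finsupp.sum_fintype _ _ fun _ => rfl

lemma le_fsum {n : ℕ} (e : Fin n →₀ ℕ) (i : Fin n) : e i ≤ e.sum fun _ k => k := by
  rw [fsum_eq]; exact Finset.single_le_sum (fun _ _ => Nat.zero_le _) (Finset.mem_univ i)

lemma d_eq_single1 (d : Fin 1 →₀ ℕ) : d = Finsupp.single 0 (d 0) := by
  apply Finsupp.ext; intro i
  fin_cases i <;> simp

lemma d_eq_single2 (d : Fin 2 →₀ ℕ) (h : d 1 = 0) : d = Finsupp.single 0 (d 0) := by
  apply Finsupp.ext; intro i
  fin_cases i <;> simp [h]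

-- coefficient of A = S(zχ)
lemma coeffA (S : MvPowerSeries (Fin 1) ℂ) (e : Fin 3 →₀ ℕ) :
    MvPowerSeries.coeff e (pssubst S ![X3 0 * X3 1]) =
      if e 2 = 0 ∧ e 0 = e 1 then MvPowerSeries.coeff (Finsupp.single 0 (e 0)) S else 0 := by
  rw [coeff_pssubst]
  have hprod : ∀ d : Fin 1 →₀ ℕ, (∏ i, (![X3 0 * X3 1] : Fin 1 → MvPowerSeries (Fin 3) ℂ) i ^ d i)
      = monomial (Finsupp.single 0 (d 0) + Finsupp.single 1 (d 0)) 1 := by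
    intro d
    rw [Fin.prod_univ_one]
    simp only [Matrix.cons_val_zero, X3, mul_pow, X_pow_eq, monomial_mul_monomial, one_mul]
  split_ifs with h
  · refine Finset.sum_eq_single_of_mem (Finsupp.single 0 (e 0)) ?_ ?_ |>.trans ?_
    · exact mem_expSet.mpr fun i => by
        fin_cases i; simpa using le_fsum e 0
    · intro d _ hd
      rw [hprod, coeff_monomial, if_neg, mul_zero]
      intro he
      apply hd
      have : e 0 = d 0 := by rw [he]; simp [Finsupp.single_apply]
      rw [d_eq_single1 d, ← this]
    · have he : e = Finsupp.single 0 (e 0) + Finsupp.single 1 (e 0) := by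
        apply Finsupp.ext; intro i
        fin_cases i <;> simp [Finsupp.single_apply, h.1, ← h.2]
      rw [hprod]
      simp only [Finsupp.single_eq_same]
      rw [coeff_monomial, if_pos he, mul_one]
  · refine Finset.sum_eq_zero fun d _ => ?_
    rw [hprod, coeff_monomial, if_neg, mul_zero]
    intro he
    apply h
    rw [he]
    simp [Finsupp.single_apply]

lemma coeff_X2pow_mul (V : MvPowerSeries (Fin 3) ℂ) {m : ℕ} (hm : m ≠ 0)
    {e : Fin 3 →₀ ℕ} (he : e 2 = 0) :
    MvPowerSeries.coeff e ((X3 2) ^ m * V) = 0 := by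
  rw [coeff_mul]
  refine Finset.sum_eq_zero fun p hp => ?_
  rw [Finset.HasAntidiagonal.mem_antidiagonal] at hp
  rw [X3, X_pow_eq, coeff_monomial, if_neg, zero_mul]
  intro h
  have h2 : p.1 2 + p.2 2 = 0 := by
    rw [← Finsupp.add_apply, hp, he]
  have : p.1 2 = m := by rw [h]; simp
  omega

-- coefficient of pssubst φ ![X3 0, X3 2 * W] at e with e 2 = 0
lemma coeffFB (φ : MvPowerSeries (Fin 2) ℂ) (W : MvPowerSeries (Fin 3) ℂ)
    {e : Fin 3 →₀ ℕ} (he : e 2 = 0) :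
    MvPowerSeries.coeff e (pssubst φ ![X3 0, X3 2 * W]) =
      if e 1 = 0 then MvPowerSeries.coeff (Finsupp.single 0 (e 0)) φ else 0 := by
  rw [coeff_pssubst]
  have hprod : ∀ d : Fin 2 →₀ ℕ,
      (∏ i, (![X3 0, X3 2 * W] : Fin 2 → MvPowerSeries (Fin 3) ℂ) i ^ d i)
      = (X3 2) ^ (d 1) * ((X3 0) ^ (d 0) * W ^ (d 1)) := by
    intro d
    rw [Fin.prod_univ_two]
    simp only [Matrix.cons_val_zero, Matrix.cons_val_one, Matrix.head_cons, mul_pow]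
    ring
  have hterm : ∀ d : Fin 2 →₀ ℕ, d 1 = 0 →
      MvPowerSeries.coeff e (∏ i, (![X3 0, X3 2 * W] : Fin 2 → MvPowerSeries (Fin 3) ℂ) i ^ d i)
      = if e = Finsupp.single 0 (d 0) then 1 else 0 := by
    intro d hd1
    rw [hprod, hd1, pow_zero, pow_zero, one_mul, mul_one, X3, X_pow_eq, coeff_monomial]
  split_ifs with h
  · refine Finset.sum_eq_single_of_mem (Finsupp.single 0 (e 0)) ?_ ?_ |>.trans ?_
    · exact mem_expSet.mpr fun i => by
        fin_cases i <;> simpa [Finsupp.single_apply] using le_fsum e 0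
    · intro d _ hd
      rcases Nat.eq_zero_or_pos (d 1) with hd1 | hd1
      · rw [hterm d hd1, if_neg, mul_zero]
        intro hee
        apply hd
        have : e 0 = d 0 := by rw [hee]; simp
        rw [d_eq_single2 d hd1, ← this]
      · rw [hprod, coeff_X2pow_mul _ (by omega) he, mul_zero]
    · have he' : e = Finsupp.single 0 (e 0) := by
        apply Finsupp.ext; intro i
        fin_cases i <;> simp [Finsupp.single_apply, h, he]
      rw [hterm _ (by simp)]
      simp only [Finsupp.single_eq_same]
      rw [if_pos he', mul_one]
  · refine Finset.sum_eq_zero fun d _ => ?_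
    rcases Nat.eq_zero_or_pos (d 1) with hd1 | hd1
    · rw [hterm d hd1, if_neg, mul_zero]
      intro hee
      apply h
      rw [hee]
      simp [Finsupp.single_apply]
    · rw [hprod, coeff_X2pow_mul _ (by omega) he, mul_zero]

-- coefficient of pssubst φ ![X3 1, X3 2] at e with e 2 = 0
lemma coeffH (φ : MvPowerSeries (Fin 2) ℂ) {e : Fin 3 →₀ ℕ} (he : e 2 = 0) :
    MvPowerSeries.coeff e (pssubst φ ![X3 1, X3 2]) =
      if e 0 = 0 then MvPowerSeries.coeff (Finsupp.single 0 (e 1)) φ else 0 := by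
  rw [coeff_pssubst]
  have hterm : ∀ d : Fin 2 →₀ ℕ,
      MvPowerSeries.coeff e (∏ i, (![X3 1, X3 2] : Fin 2 → MvPowerSeries (Fin 3) ℂ) i ^ d i)
      = if e = Finsupp.single 1 (d 0) + Finsupp.single 2 (d 1) then 1 else 0 := by
    intro d
    rw [Fin.prod_univ_two]
    simp only [Matrix.cons_val_zero, Matrix.cons_val_one, Matrix.head_cons, X3, X_pow_eq,
      monomial_mul_monomial, one_mul, coeff_monomial]
  split_ifs with h
  · refine Finset.sum_eq_single_of_mem (Finsupp.single 0 (e 1)) ?_ ?_ |>.trans ?_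
    · exact mem_expSet.mpr fun i => by
        fin_cases i <;> simpa [Finsupp.single_apply] using le_fsum e 1
    · intro d _ hd
      rw [hterm d, if_neg, mul_zero]
      intro hee
      apply hd
      have h0 : e 1 = d 0 := by rw [hee]; simp [Finsupp.single_apply]
      have h1 : d 1 = 0 := by
        have : e 2 = d 1 := by rw [hee]; simp [Finsupp.single_apply]
        omega
      rw [d_eq_single2 d h1, ← h0]
    · have he' : e = Finsupp.single 1 (e 1) + Finsupp.single 2 (0 : ℕ) := by
        apply Finsupp.ext; intro i
        fin_cases i <;> simp [Finsupp.single_apply, h, he]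
      rw [hterm]
      simp only [Finsupp.single_eq_same, Finsupp.single_apply]
      rw [if_pos, mul_one]
      convert he' using 3 <;> simp
  · refine Finset.sum_eq_zero fun d _ => ?_
    rw [hterm d, if_neg, mul_zero]
    intro hee
    apply h
    rw [hee]
    simp [Finsupp.single_apply]

lemma a0_eq (f : MvPowerSeries (Fin 2) ℂ) (hf0 : constantCoeff f = 0) :
    MvPowerSeries.coeff (Finsupp.single (0 : Fin 2) 0) f = 0 := by
  rw [Finsupp.single_zero, MvPowerSeries.coeff_zero_eq_constantCoeff_apply, hf0]

lemma coeffU (f : MvPowerSeries (Fin 2) ℂ) (W : MvPowerSeries (Fin 3) ℂ)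
    {e : Fin 3 →₀ ℕ} (he : e 2 = 0) :
    MvPowerSeries.coeff e (pssubst f ![X3 0, X3 2 * W] *
        pssubst (conjSeries f) ![X3 1, X3 2]) =
      MvPowerSeries.coeff (Finsupp.single 0 (e 0)) f *
        (starRingEnd ℂ) (MvPowerSeries.coeff (Finsupp.single 0 (e 1)) f) := by
  rw [coeff_mul]
  refine Finset.sum_eq_single_of_mem (Finsupp.single 0 (e 0), Finsupp.single 1 (e 1)) ?_ ?_
    |>.trans ?_
  · rw [Finset.HasAntidiagonal.mem_antidiagonal]
    apply Finsupp.ext; intro i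
    fin_cases i <;> simp [Finsupp.single_apply, he]
  · rintro ⟨p, q⟩ hpq hne
    rw [Finset.HasAntidiagonal.mem_antidiagonal] at hpq
    have hp2 : p 2 = 0 ∧ q 2 = 0 := by
      have : p 2 + q 2 = e 2 := by rw [← Finsupp.add_apply, hpq]
      omega
    rw [coeffFB f W hp2.1, coeffH _ hp2.2]
    rcases Nat.eq_zero_or_pos (p 1) with h1 | h1
    · rcases Nat.eq_zero_or_pos (q 0) with h2 | h2
      · exfalso
        apply hne
        have hp0 : p 0 = e 0 := by
          have : p 0 + q 0 = e 0 := by rw [← Finsupp.add_apply, hpq]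
          omega
        have hq1 : q 1 = e 1 := by
          have : p 1 + q 1 = e 1 := by rw [← Finsupp.add_apply, hpq]
          omega
        have hp : p = Finsupp.single 0 (e 0) := by
          apply Finsupp.ext; intro i
          fin_cases i <;> simp [Finsupp.single_apply, h1, hp2.1, hp0]
        have hq : q = Finsupp.single 1 (e 1) := by
          apply Finsupp.ext; intro i
          fin_cases i <;> simp [Finsupp.single_apply, h2, hp2.2, hq1]
        rw [hp, hq]
      · rw [if_neg (by omega : ¬ q 0 = 0), mul_zero]
    · rw [if_neg (by omega : ¬ p 1 = 0), zero_mul]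
  · rw [coeffFB f W (by simp), coeffH _ (by simp [Finsupp.single_apply])]
    simp [conjSeries, MvPowerSeries.coeff_map, Finsupp.single_apply]

lemma coeffUpow_zero (f : MvPowerSeries (Fin 2) ℂ) (W : MvPowerSeries (Fin 3) ℂ)
    (hf0 : constantCoeff f = 0) (m : ℕ) {e : Fin 3 →₀ ℕ}
    (he1 : e 1 = 0) (he2 : e 2 = 0) :
    MvPowerSeries.coeff e ((pssubst f ![X3 0, X3 2 * W] *
        pssubst (conjSeries f) ![X3 1, X3 2]) ^ (m + 1)) = 0 := by
  induction m generalizing e with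
  | zero =>
    rw [pow_one, coeffU f W he2, he1, a0_eq f hf0]
    simp
  | succ m ih =>
    rw [pow_succ, coeff_mul]
    refine Finset.sum_eq_zero fun p hp => ?_
    rw [Finset.HasAntidiagonal.mem_antidiagonal] at hp
    have h1 : p.1 1 = 0 := by
      have : p.1 1 + p.2 1 = e 1 := by rw [← Finsupp.add_apply, hp]
      omega
    have h2 : p.1 2 = 0 := by
      have : p.1 2 + p.2 2 = e 2 := by rw [← Finsupp.add_apply, hp]
      omega
    rw [ih h1 h2, zero_mul]

lemma coeffUpow_one (f : MvPowerSeries (Fin 2) ℂ) (W : MvPowerSeries (Fin 3) ℂ)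
    (hf0 : constantCoeff f = 0) (m : ℕ) {e : Fin 3 →₀ ℕ}
    (he1 : e 1 = 1) (he2 : e 2 = 0) :
    MvPowerSeries.coeff e ((pssubst f ![X3 0, X3 2 * W] *
        pssubst (conjSeries f) ![X3 1, X3 2]) ^ (m + 2)) = 0 := by
  rw [pow_succ, coeff_mul]
  refine Finset.sum_eq_zero fun p hp => ?_
  rw [Finset.HasAntidiagonal.mem_antidiagonal] at hp
  have hs1 : p.1 1 + p.2 1 = 1 := by rw [← Finsupp.add_apply, hp, he1]
  have hs2 : p.1 2 + p.2 2 = 0 := by rw [← Finsupp.add_apply, hp, he2]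
  rcases Nat.eq_zero_or_pos (p.1 1) with h1 | h1
  · rw [coeffUpow_zero f W hf0 m h1 (by omega), zero_mul]
  · rw [coeffU f W (by omega : p.2 2 = 0)]
    have : p.2 1 = 0 := by omega
    rw [this, a0_eq f hf0]
    simp

lemma coeffD (S : MvPowerSeries (Fin 1) ℂ) (f : MvPowerSeries (Fin 2) ℂ)
    (W : MvPowerSeries (Fin 3) ℂ) (hf0 : constantCoeff f = 0)
    {e : Fin 3 →₀ ℕ} (he1 : e 1 = 1) (he2 : e 2 = 0) :
    MvPowerSeries.coeff e (pssubst S ![pssubst f ![X3 0, X3 2 * W] *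
        pssubst (conjSeries f) ![X3 1, X3 2]]) =
      MvPowerSeries.coeff (Finsupp.single 0 1) S *
        (MvPowerSeries.coeff (Finsupp.single 0 (e 0)) f *
          (starRingEnd ℂ) (MvPowerSeries.coeff (Finsupp.single 0 1) f)) := by
  rw [coeff_pssubst]
  have hprod : ∀ d : Fin 1 →₀ ℕ,
      (∏ i, (![pssubst f ![X3 0, X3 2 * W] * pssubst (conjSeries f) ![X3 1, X3 2]] :
        Fin 1 → MvPowerSeries (Fin 3) ℂ) i ^ d i)
      = (pssubst f ![X3 0, X3 2 * W] * pssubst (conjSeries f) ![X3 1, X3 2]) ^ (d 0) := by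
    intro d
    rw [Fin.prod_univ_one, Matrix.cons_val_zero]
  refine Finset.sum_eq_single_of_mem (Finsupp.single 0 1) ?_ ?_ |>.trans ?_
  · refine mem_expSet.mpr fun i => ?_
    fin_cases i
    simpa [Finsupp.single_apply, ← he1] using le_fsum e 1
  · intro d _ hd
    rw [hprod]
    have hd0 : d 0 ≠ 1 := by
      intro h
      apply hd
      rw [d_eq_single1 d, h]
    match hm : d 0 with
    | 0 => rw [pow_zero, MvPowerSeries.coeff_one, if_neg, mul_zero]
           intro h0
           rw [h0] at he1
           simp at he1
    | 1 => exact absurd hm hd0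
    | (m+2) => rw [coeffUpow_one f W hf0 m he1 he2, mul_zero]
  · rw [hprod]
    simp only [Finsupp.single_eq_same, pow_one]
    rw [coeffU f W he2, he1]

theorem stmt_16 (S : MvPowerSeries (Fin 1) ℂ)
    (hS0 : constantCoeff S = 1)
    (hS1 : MvPowerSeries.coeff (Finsupp.single 0 1) S = Complex.I)
    (f g : MvPowerSeries (Fin 2) ℂ)
    (hf0 : constantCoeff f = 0)
    (hinv : MvPowerSeries.coeff (Finsupp.single 0 1) f * constantCoeff g ≠ 0)
    -- from the previous step: g(z,0) ≡ b₀⁰ ∈ ℝ \ {0}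
    (b : ℝ) (hb : b ≠ 0) (hgb : constantCoeff g = (b : ℂ))
    (hg0 : ∀ k : ℕ, MvPowerSeries.coeff (Finsupp.single 0 k) g
        = if k = 0 then (b : ℂ) else 0)
    -- the identity  S(zχ) g(z, τ S(zχ)) = conj-g(χ,τ) · S(f(z, τ S(zχ)) · conj-f(χ,τ))
    (hid : pssubst S ![X3 0 * X3 1] *
          pssubst g ![X3 0, X3 2 * pssubst S ![X3 0 * X3 1]]
        = pssubst (conjSeries g) ![X3 1, X3 2] *
          pssubst S ![pssubst f ![X3 0, X3 2 * pssubst S ![X3 0 * X3 1]] *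
            pssubst (conjSeries f) ![X3 1, X3 2]]) :
    (∀ k : ℕ, MvPowerSeries.coeff (Finsupp.single 0 k) f
        = if k = 1 then 1 / (starRingEnd ℂ) (MvPowerSeries.coeff (Finsupp.single 0 1) f)
          else 0) ∧
      (starRingEnd ℂ) ((starRingEnd ℂ) (MvPowerSeries.coeff (Finsupp.single 0 1) f))
        = 1 / (starRingEnd ℂ) (MvPowerSeries.coeff (Finsupp.single 0 1) f) ∧
      ‖(starRingEnd ℂ) (MvPowerSeries.coeff (Finsupp.single 0 1) f)‖ = 1 := by
  have hbne : (b : ℂ) ≠ 0 := Complex.ofReal_ne_zero.mpr hb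
  have key : ∀ k : ℕ, MvPowerSeries.coeff (Finsupp.single 0 k) f *
      (starRingEnd ℂ) (MvPowerSeries.coeff (Finsupp.single 0 1) f)
      = if k = 1 then 1 else 0 := by
    intro k
    set e : Fin 3 →₀ ℕ := Finsupp.single 0 k + Finsupp.single 1 1 with heq
    have he0 : e 0 = k := by simp [heq, Finsupp.single_apply]
    have he1 : e 1 = 1 := by simp [heq, Finsupp.single_apply]
    have he2 : e 2 = 0 := by simp [heq, Finsupp.single_apply]
    have hidc := congrArg (MvPowerSeries.coeff e) hid
    have hL : MvPowerSeries.coeff e (pssubst S ![X3 0 * X3 1] *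
          pssubst g ![X3 0, X3 2 * pssubst S ![X3 0 * X3 1]])
        = (if k = 1 then Complex.I else 0) * (b : ℂ) := by
      rw [coeff_mul]
      refine Finset.sum_eq_single_of_mem (e, 0) ?_ ?_ |>.trans ?_
      · rw [Finset.HasAntidiagonal.mem_antidiagonal, add_zero]
      · rintro ⟨p, q⟩ hpq hne
        rw [Finset.HasAntidiagonal.mem_antidiagonal] at hpq
        have hq2 : q 2 = 0 := by
          have : p 2 + q 2 = e 2 := by rw [← Finsupp.add_apply, hpq]
          omega
        rw [coeffFB g _ hq2]
        rcases Nat.eq_zero_or_pos (q 1) with h1 | h1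
        · rw [if_pos h1, hg0 (q 0)]
          rcases Nat.eq_zero_or_pos (q 0) with h0 | h0
          · exfalso
            apply hne
            have hq : q = 0 := by
              apply Finsupp.ext; intro i
              fin_cases i <;> simp [h0, h1, hq2]
            have hp : p = e := by rw [← hpq, hq, add_zero]
            rw [hp, hq]
          · rw [if_neg (by omega), mul_zero]
        · rw [if_neg (by omega : ¬ q 1 = 0), mul_zero]
      · rw [coeffFB g _ (by simp : (0 : Fin 3 →₀ ℕ) 2 = 0)]
        have h01 : (0 : Fin 3 →₀ ℕ) 1 = 0 := by simp
        have h00 : (0 : Fin 3 →₀ ℕ) 0 = 0 := by simp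
        rw [h01, if_pos rfl, h00, hg0 0, if_pos rfl, coeffA, he0, he1, he2]
        by_cases hk : k = 1
        · subst hk
          rw [if_pos ⟨rfl, rfl⟩, hS1, if_pos rfl]
        · rw [if_neg (by tauto), if_neg hk]
    have hR : MvPowerSeries.coeff e (pssubst (conjSeries g) ![X3 1, X3 2] *
          pssubst S ![pssubst f ![X3 0, X3 2 * pssubst S ![X3 0 * X3 1]] *
            pssubst (conjSeries f) ![X3 1, X3 2]])
        = (b : ℂ) * (Complex.I * (MvPowerSeries.coeff (Finsupp.single 0 k) f *
            (starRingEnd ℂ) (MvPowerSeries.coeff (Finsupp.single 0 1) f))) := by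
      rw [coeff_mul]
      refine Finset.sum_eq_single_of_mem (0, e) ?_ ?_ |>.trans ?_
      · rw [Finset.HasAntidiagonal.mem_antidiagonal, zero_add]
      · rintro ⟨p, q⟩ hpq hne
        rw [Finset.HasAntidiagonal.mem_antidiagonal] at hpq
        have hp2 : p 2 = 0 := by
          have : p 2 + q 2 = e 2 := by rw [← Finsupp.add_apply, hpq]
          omega
        rw [coeffH _ hp2]
        rcases Nat.eq_zero_or_pos (p 0) with h0 | h0
        · rw [if_pos h0, conjSeries, MvPowerSeries.coeff_map, hg0 (p 1)]
          rcases Nat.eq_zero_or_pos (p 1) with h1 | h1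
          · exfalso
            apply hne
            have hp : p = 0 := by
              apply Finsupp.ext; intro i
              fin_cases i <;> simp [h0, h1, hp2]
            have hq : q = e := by rw [← hpq, hp, zero_add]
            rw [hp, hq]
          · rw [if_neg (by omega), map_zero, zero_mul]
        · rw [if_neg (by omega : ¬ p 0 = 0), zero_mul]
      · rw [coeffH _ (by simp : (0 : Fin 3 →₀ ℕ) 2 = 0),
          coeffD S f _ hf0 he1 he2, hS1, he0]
        have h00 : (0 : Fin 3 →₀ ℕ) 0 = 0 := by simp
        have h01 : (0 : Fin 3 →₀ ℕ) 1 = 0 := by simp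
        rw [h00, if_pos rfl, h01, conjSeries, MvPowerSeries.coeff_map, hg0 0, if_pos rfl,
          Complex.conj_ofReal]
    rw [hL, hR] at hidc
    by_cases hk : k = 1
    · rw [if_pos hk] at hidc ⊢
      have h1 : Complex.I * (MvPowerSeries.coeff (Finsupp.single 0 k) f *
          (starRingEnd ℂ) (MvPowerSeries.coeff (Finsupp.single 0 1) f))
          = Complex.I * 1 := by
        apply mul_left_cancel₀ hbne
        rw [← hidc]; ring
      exact mul_left_cancel₀ Complex.I_ne_zero h1
    · rw [if_neg hk, zero_mul] at hidc
      rw [if_neg hk]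
      have := hidc.symm
      rw [mul_eq_zero, mul_eq_zero] at this
      rcases this with h | h | h
      · exact absurd h hbne
      · exact absurd h Complex.I_ne_zero
      · exact h
  have ha1 : MvPowerSeries.coeff (Finsupp.single 0 1) f ≠ 0 := left_ne_zero_of_mul hinv
  have hca1 : (starRingEnd ℂ) (MvPowerSeries.coeff (Finsupp.single 0 1) f) ≠ 0 := by
    simpa using ha1
  have hmain : MvPowerSeries.coeff (Finsupp.single 0 1) f *
      (starRingEnd ℂ) (MvPowerSeries.coeff (Finsupp.single 0 1) f) = 1 := by
    simpa using key 1
  refine ⟨?_, ?_, ?_⟩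
  · intro k
    by_cases hk : k = 1
    · subst hk
      rw [if_pos rfl, eq_div_iff hca1]
      exact hmain
    · rw [if_neg hk]
      have h := key k
      rw [if_neg hk] at h
      exact (mul_eq_zero.mp h).resolve_right hca1
  · rw [Complex.conj_conj, eq_div_iff hca1]
    exact hmain
  · have hns : Complex.normSq (MvPowerSeries.coeff (Finsupp.single 0 1) f) = 1 := by
      exact_mod_cast (Complex.mul_conj _).symm.trans hmain
    rw [Complex.norm_conj, Complex.norm_def, hns, Real.sqrt_one]
end
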